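/- Given nonempty compact sets A_0, …, A_n ⊆ ℝ^d (n ≥ 1), an index 0 ≤ j ≤ n and a point a ∈ A_j, there exists a metric chain (a_0, …, a_n) of A_0, …, A_n with a_j = a. -/

import Mathlib

open Filter Metric Topology Set TopologicalSpace

noncomputable section

/-- The set of projections of `x` on `B`: points of `B` nearest to `x`. -/
def metricProj {E : Type*} [MetricSpace E] (x : E) (B : Set E) : Set E :=
  {b ∈ B | dist x b = Metric.infDist x B}

/-- The set of metric pairs of `A` and `B`. -/
def MetricPairs {E : Type*} [MetricSpace E] (A B : Set E) : Set (E × E) :=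
  {p | p.1 ∈ A ∧ p.2 ∈ B ∧ (p.1 ∈ metricProj p.2 A ∨ p.2 ∈ metricProj p.1 B)}

/-- A partition `a = x_0 < x_1 < ... < x_n = b` of `[a,b]`. -/
structure ChainPartition (a b : ℝ) where
  n : ℕ
  pts : Fin (n + 1) → ℝ
  mono : StrictMono pts
  first : pts 0 = a
  last : pts (Fin.last n) = b

/-- The norm `|χ| = max_i (x_{i+1} - x_i)` of a partition. -/
noncomputable def ChainPartition.meshNorm {a b : ℝ} (χ : ChainPartition a b) : ℝ :=
  ⨆ i : Fin χ.n, (χ.pts i.succ - χ.pts i.castSucc)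

/-- `c` is a chain function of the set-valued function `F` based on the partition `χ`:
it is piecewise constant, with values at consecutive partition points forming metric pairs
of the corresponding values of `F`. -/
def IsChainFun {E : Type*} [MetricSpace E] {a b : ℝ}
    (F : ℝ → Set E) (χ : ChainPartition a b) (c : ℝ → E) : Prop :=
  ∃ y : Fin (χ.n + 1) → E,
    (∀ i : Fin χ.n,
      (y i.castSucc, y i.succ) ∈ MetricPairs (F (χ.pts i.castSucc)) (F (χ.pts i.succ))) ∧
    (∀ i : Fin χ.n, ∀ t ∈ Set.Ico (χ.pts i.castSucc) (χ.pts i.succ), c t = y i.castSucc) ∧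
    c b = y (Fin.last χ.n)

/-- `s` is a metric selection of `F` on `[a,b]`: a selection of `F` which is the pointwise
limit of a sequence of chain functions of `F` whose partition norms tend to `0`. -/
def IsMetricSelection {E : Type*} [MetricSpace E] (F : ℝ → Set E) (a b : ℝ) (s : ℝ → E) : Prop :=
  (∀ x ∈ Set.Icc a b, s x ∈ F x) ∧
  ∃ χ : ℕ → ChainPartition a b, ∃ c : ℕ → ℝ → E,
    (∀ k, IsChainFun F (χ k) (c k)) ∧
    Filter.Tendsto (fun k => (χ k).meshNorm) Filter.atTop (nhds 0) ∧
    ∀ x ∈ Set.Icc a b, Filter.Tendsto (fun k => c k x) Filter.atTop (nhds (s x))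

/-- Property 2 of `F` at `ξ`, with `Fm = F(ξ-)`, `Fp = F(ξ+)`: every metric pair of the
one-sided limits is a limit of metric pairs `(y_n^-, y_n^+) ∈ Π(F(ξ_n^-), F(ξ_n^+))`
with `ξ_n^- < ξ < ξ_n^+`, `ξ_n^± → ξ`. -/
def Property2 {E : Type*} [MetricSpace E] (F : ℝ → Set E) (a b ξ : ℝ)
    (Fm Fp : Set E) : Prop :=
  ∀ ym yp : E, (ym, yp) ∈ MetricPairs Fm Fp →
    ∃ ξm ξp : ℕ → ℝ, ∃ ym' yp' : ℕ → E,
      (∀ n, ξm n ∈ Set.Ico a ξ) ∧ (∀ n, ξp n ∈ Set.Ioc ξ b) ∧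
      Filter.Tendsto ξm Filter.atTop (nhds ξ) ∧ Filter.Tendsto ξp Filter.atTop (nhds ξ) ∧
      (∀ n, (ym' n, yp' n) ∈ MetricPairs (F (ξm n)) (F (ξp n))) ∧
      Filter.Tendsto ym' Filter.atTop (nhds ym) ∧ Filter.Tendsto yp' Filter.atTop (nhds yp)

/-- The metric average `(1/2) A ⊕ (1/2) B = {(a+b)/2 : (a,b) ∈ Π(A,B)}`. -/
def metricAvg {E : Type*} [NormedAddCommGroup E] [NormedSpace ℝ E] (A B : Set E) : Set E :=
  {v | ∃ p ∈ MetricPairs A B, v = (2⁻¹ : ℝ) • (p.1 + p.2)}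

/-- The limit set `A_F(x) = {(s(x-) + s(x+))/2 : s a metric selection of F}`. -/
def limitSet {E : Type*} [NormedAddCommGroup E] [NormedSpace ℝ E]
    (F : ℝ → Set E) (a b x : ℝ) : Set E :=
  {v | ∃ s : ℝ → E, ∃ sm sp : E, IsMetricSelection F a b s ∧
      Filter.Tendsto s (nhdsWithin x (Set.Ico a x)) (nhds sm) ∧
      Filter.Tendsto s (nhdsWithin x (Set.Ioc x b)) (nhds sp) ∧
      v = (2⁻¹ : ℝ) • (sm + sp)}

/-- The left local quasi-modulus `ω̃⁻(f, xs, δ)` of `f` at `xs`, where `fl = f(xs-)`. -/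
noncomputable def qmodLeft {X : Type*} [PseudoMetricSpace X]
    (f : ℝ → X) (fl : X) (a b xs δ : ℝ) : ℝ :=
  sSup {r | ∃ x ∈ Set.Ico (xs - δ) xs ∩ Set.Icc a b, r = dist fl (f x)}

/-- The right local quasi-modulus `ω̃⁺(f, xs, δ)` of `f` at `xs`, where `fr = f(xs+)`. -/
noncomputable def qmodRight {X : Type*} [PseudoMetricSpace X]
    (f : ℝ → X) (fr : X) (a b xs δ : ℝ) : ℝ :=
  sSup {r | ∃ x ∈ Set.Ioc xs (xs + δ) ∩ Set.Icc a b, r = dist fr (f x)}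

/-- The graph of a set-valued function on `[a,b]` is compact. -/
def HasCompactGraph {E : Type*} [MetricSpace E] (F : ℝ → Set E) (a b : ℝ) : Prop :=
  IsCompact {p : ℝ × E | p.1 ∈ Set.Icc a b ∧ p.2 ∈ F p.1}

/-- The (real-valued) variation function `v_f(x) = V_a^x(f)`. -/
noncomputable def varFun {X : Type*} [PseudoEMetricSpace X] (f : ℝ → X) (a x : ℝ) : ℝ :=
  (eVariationOn f (Set.Icc a x)).toReal

/-- Upper Kuratowski limit of a sequence of sets in a topological space. -/
def kuratowskiLimsup {X : Type*} [TopologicalSpace X] (C : ℕ → Set X) : Set X :=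
  {x | ∃ φ : ℕ → ℕ, StrictMono φ ∧ ∃ c : ℕ → X,
    (∀ k, c k ∈ C (φ k)) ∧ Filter.Tendsto c Filter.atTop (nhds x)}

/-!
The chain is grown outward from `a ∈ A j`, one set at a time in either direction: the new point
is a nearest point of the next set to the current end of the chain, which exists by compactness,
so each new pair is a metric pair.
-/

section MetricChain

variable {E : Type*} [MetricSpace E]

theorem metricProj_nonempty {B : Set E} (hB : IsCompact B) (hBne : B.Nonempty) (x : E) :
    (metricProj x B).Nonempty := by
  obtain ⟨b, hb, hdist⟩ := hB.exists_infDist_eq_dist hBne x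
  exact ⟨b, hb, hdist.symm⟩

theorem mk_mem_metricPairs_of_mem_metricProj_left {A B : Set E} {a b : E}
    (ha : a ∈ metricProj b A) (hb : b ∈ B) : (a, b) ∈ MetricPairs A B :=
  ⟨ha.1, hb, Or.inl ha⟩

theorem mk_mem_metricPairs_of_mem_metricProj_right {A B : Set E} {a b : E}
    (ha : a ∈ A) (hb : b ∈ metricProj a B) : (a, b) ∈ MetricPairs A B :=
  ⟨ha, hb.1, Or.inr hb⟩

def IsMetricChain {n : ℕ} (A : Fin (n + 1) → Set E) (ch : Fin (n + 1) → E) : Prop :=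
  ∀ i : Fin n, (ch i.castSucc, ch i.succ) ∈ MetricPairs (A i.castSucc) (A i.succ)

theorem IsMetricChain.mem {n : ℕ} {A : Fin (n + 1) → Set E} {ch : Fin (n + 1) → E}
    (h : IsMetricChain A ch) {j : Fin (n + 1)} (hj : ch j ∈ A j) (i : Fin (n + 1)) :
    ch i ∈ A i := by
  cases n with
  | zero => rwa [Fin.fin_one_eq_zero i, ← Fin.fin_one_eq_zero j]
  | succ n =>
    induction i using Fin.lastCases with
    | last => simpa using (h (Fin.last n)).2.1
    | cast k => exact (h k).1

theorem IsMetricChain.cons {n : ℕ} {A : Fin (n + 2) → Set E} {ch : Fin (n + 1) → E} {b : E}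
    (h : IsMetricChain (fun i => A i.succ) ch) (hb : (b, ch 0) ∈ MetricPairs (A 0) (A 1)) :
    IsMetricChain A (Fin.cons b ch) := by
  intro i
  induction i using Fin.cases with
  | zero => simpa using hb
  | succ k =>
    rw [← Fin.succ_castSucc, Fin.cons_succ, Fin.cons_succ]
    exact h k

theorem IsMetricChain.snoc {n : ℕ} {A : Fin (n + 2) → Set E} {ch : Fin (n + 1) → E} {b : E}
    (h : IsMetricChain (fun i => A i.castSucc) ch)
    (hb : (ch (Fin.last n), b) ∈ MetricPairs (A (Fin.last n).castSucc) (A (Fin.last (n + 1)))) :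
    IsMetricChain A (Fin.snoc ch b) := by
  intro i
  induction i using Fin.lastCases with
  | last => simpa using hb
  | cast k =>
    rw [Fin.succ_castSucc, Fin.snoc_castSucc, Fin.snoc_castSucc]
    exact h k

theorem exists_isMetricChain_apply_eq {n : ℕ} (A : Fin (n + 1) → Set E)
    (hA : ∀ i, IsCompact (A i)) (hAne : ∀ i, (A i).Nonempty)
    (j : Fin (n + 1)) (a : E) (ha : a ∈ A j) :
    ∃ ch : Fin (n + 1) → E, IsMetricChain A ch ∧ ch j = a := by
  induction n with
  | zero => exact ⟨fun _ => a, fun i => i.elim0, rfl⟩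
  | succ n ih =>
    induction j using Fin.lastCases with
    | last =>
      rw [← Fin.succ_last] at ha
      obtain ⟨ch, hch, rfl⟩ := ih (fun i => A i.succ) (fun _ => hA _) (fun _ => hAne _) _ ha
      obtain ⟨b, hb⟩ := metricProj_nonempty (hA 0) (hAne 0) (ch 0)
      refine ⟨Fin.cons b ch, hch.cons ?_, by simp [← Fin.succ_last]⟩
      exact mk_mem_metricPairs_of_mem_metricProj_left hb (hch.mem ha 0)
    | cast j =>
      obtain ⟨ch, hch, rfl⟩ :=
        ih (fun i => A i.castSucc) (fun _ => hA _) (fun _ => hAne _) _ ha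
      obtain ⟨b, hb⟩ := metricProj_nonempty (hA _) (hAne _) (ch (Fin.last n))
      exact ⟨Fin.snoc ch b,
        hch.snoc (mk_mem_metricPairs_of_mem_metricProj_right (hch.mem ha _) hb), by simp⟩

end MetricChain

theorem stmt_4_general {d : ℕ} {n : ℕ}
    (A : Fin (n + 1) → Set (EuclideanSpace ℝ (Fin d)))
    (hA : ∀ i, IsCompact (A i)) (hAne : ∀ i, (A i).Nonempty)
    (j : Fin (n + 1)) (a : EuclideanSpace ℝ (Fin d)) (ha : a ∈ A j) :
    ∃ ch : Fin (n + 1) → EuclideanSpace ℝ (Fin d),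
      (∀ i : Fin n, (ch i.castSucc, ch i.succ) ∈ MetricPairs (A i.castSucc) (A i.succ)) ∧
      ch j = a :=
  exists_isMetricChain_apply_eq A hA hAne j a ha

/-- through any point of any of the sets there is a metric chain. -/
theorem stmt_4 {d : ℕ} {n : ℕ} (hn : 1 ≤ n)
    (A : Fin (n + 1) → Set (EuclideanSpace ℝ (Fin d)))
    (hA : ∀ i, IsCompact (A i)) (hAne : ∀ i, (A i).Nonempty)
    (j : Fin (n + 1)) (a : EuclideanSpace ℝ (Fin d)) (ha : a ∈ A j) :
    ∃ ch : Fin (n + 1) → EuclideanSpace ℝ (Fin d),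
      (∀ i : Fin n, (ch i.castSucc, ch i.succ) ∈ MetricPairs (A i.castSucc) (A i.succ)) ∧
      ch j = a :=
  stmt_4_general A hA hAne j a ha
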